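/- arXiv:0906.1806 — 6 statements merged into one kernel-verified Lean document; each statement's English description precedes it below -/
import Mathlib

section
/- Let l ≥ 1 be an integer. Assume B ⊂ X is measurable with ν(B) = ν₀ > 0, the measurable set P satisfies P ⊂ B × Y, and there is σ₀ > 0 such that σ_x(P(x)) > σ₀ for ν-a.e. x ∈ B, where P(x) = {y ∈ Y : (x,y) ∈ P}. For n ≥ 1 set P_n^l(x) = {y ∈ P(x) : n_l(x,y) ≥ n}, and define N_l(x) = sup{n ∈ ℕ : σ_x(P_n^l(x)) > σ₀} (with sup ∅ = 0). Then N_l(x) is finite for ν-a.e. x ∈ B, N_l is ν-integrable on B, and ∫_B N_l dν < l/σ₀. -/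
/-!
Write `n_l` for the `l`-th return time to `P` and `g_n(x) = σ_x{y ∈ P(x) | n ≤ n_l(x, y)}`, which
is antitone in `n`. Going backwards along `F`, a point lies in `F^{-n}{z ∈ P | n < n_l z}` for at
most `l` values of `n`, so `∑_{n ≥ 1} μ{z ∈ P | n ≤ n_l z} ≤ l` by invariance of `μ`, i.e.
`∫ ∑_{n ≥ 1} g_n dν ≤ l`. By Poincaré recurrence `g_1 = σ_x(P(x)) > σ₀` on `B`, so the terms
`g_1, …, g_{N_l(x)}` all exceed `σ₀`; hence `σ₀ N_l(x) < ∑_{n ≥ 1} g_n(x)` on `B`, and integrating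
over `B` (a set of positive measure) gives `σ₀ ∫_B N_l dν < l`.
-/

open Filter MeasureTheory ProbabilityTheory Topology
open scoped ENNReal

theorem Nat.le_nth_iff_count_le {p : ℕ → Prop} [DecidablePred p] {n k : ℕ} (hn : n ≠ 0) :
    n ≤ Nat.nth p k ↔ Nat.count p n ≤ k ∧ ∃ m, k < Nat.count p m := by
  constructor
  · intro h
    have hcard : ∀ hf : (Set.ofPred p).Finite, k < hf.toFinset.card :=
      fun hf => Nat.lt_card_toFinset_of_nth_ne_zero (by omega) hf
    refine ⟨Nat.le_nth_of_count_le h, Nat.nth p k + 1, ?_⟩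
    rw [Nat.count_nth_succ hcard]
    omega
  · rintro ⟨hcount, m, hm⟩
    have hcard : ∀ hf : (Set.ofPred p).Finite, k < hf.toFinset.card :=
      fun hf => hm.trans_le (Nat.count_le_card hf m)
    by_contra! hlt
    have := Nat.count_monotone p (Nat.succ_le_of_lt hlt)
    rw [Nat.count_nth_succ hcard] at this
    omega

section MeasurableNat

variable {α : Type*} [MeasurableSpace α] {p : ℕ → α → Prop}

theorem measurable_nat_count [∀ x, DecidablePred (p · x)] (hp : ∀ j, Measurable (p j)) (m : ℕ) :
    Measurable fun x => Nat.count (p · x) m := by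
  induction m with
  | zero => simp
  | succ m ih =>
    simp_rw [Nat.count_succ]
    exact ih.add (Measurable.ite (hp m).setOf measurable_const measurable_const)

theorem measurable_nat_nth (hp : ∀ j, Measurable (p j)) (k : ℕ) :
    Measurable fun x => Nat.nth (p · x) k := by
  classical
  refine measurable_of_Ici fun n => ?_
  rcases eq_or_ne n 0 with rfl | hn
  · simp
  simp only [Set.preimage, Set.mem_Ici, Nat.le_nth_iff_count_le hn, measurableSet_setOfPred]
  exact ((measurable_nat_count hp n).le' measurable_const).and <|
    .exists fun m => measurable_const.lt (measurable_nat_count hp m)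

theorem measurable_sSup_setOf_nat (hp : ∀ n, Measurable (p n)) :
    Measurable fun x => sSup {n : ℕ | p n x} := by
  refine measurable_of_Iic fun m => ?_
  have hset : (fun x => sSup {n : ℕ | p n x}) ⁻¹' Set.Iic m =
      {x | BddAbove {n | p n x} → ∀ n, p n x → n ≤ m} := by
    ext x
    by_cases hbdd : BddAbove {n | p n x}
    · simp [csSup_le_iff' hbdd, hbdd]
    · simp [hbdd]
  simp_rw [hset, measurableSet_setOfPred, bddAbove_def, Set.mem_ofPred_eq]
  exact .imp (.exists fun N => .forall fun n => (hp n).imp measurable_const)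
    (.forall fun n => (hp n).imp measurable_const)

end MeasurableNat

noncomputable def nthReturnTime {α : Type*} (f : α → α) (P : Set α) (k : ℕ) (z : α) : ℕ :=
  Nat.nth (fun n => 1 ≤ n ∧ f^[n] z ∈ P) k

section ReturnTime

variable {α : Type*} {f : α → α} {P : Set α} {k : ℕ}

theorem measurable_nthReturnTime [MeasurableSpace α] (hf : Measurable f) (hP : MeasurableSet P)
    (k : ℕ) : Measurable (nthReturnTime f P k) :=
  measurable_nat_nth (fun n => measurable_const.and (hP.preimage (hf.iterate n)).mem) k

/-- Seen from `g^[max s] z`, the other times of `s` are returns to `P` strictly before its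
`(k+1)`-st one, so there are at most `k` of them. -/
theorem card_le_of_forall_lt_nthReturnTime {g : α → α} (hfg : Function.LeftInverse f g) {z : α}
    {s : Finset ℕ} (hs : ∀ n ∈ s, g^[n] z ∈ P ∧ n < nthReturnTime f P k (g^[n] z)) :
    s.card ≤ k + 1 := by
  classical
  rcases s.eq_empty_or_nonempty with rfl | hne
  · simp
  set M := s.max' hne
  set w := g^[M] z
  obtain ⟨-, hMw⟩ := hs M (s.max'_mem hne)
  have hcount : Nat.count (fun n => 1 ≤ n ∧ f^[n] w ∈ P) (M + 1) ≤ k :=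
    Nat.le_nth_of_count_le hMw
  have hreturn : ∀ m ∈ s.erase M, M - m ∈ (Finset.range (M + 1)).filter
      (fun n => 1 ≤ n ∧ f^[n] w ∈ P) := by
    intro m hm
    have hmM : m < M := lt_of_le_of_ne (s.le_max' m (Finset.mem_of_mem_erase hm))
      (Finset.ne_of_mem_erase hm)
    have hback : f^[M - m] w = g^[m] z := by
      rw [show w = g^[M - m] (g^[m] z) by
        rw [← Function.iterate_add_apply, Nat.sub_add_cancel hmM.le], (hfg.iterate (M - m)) _]
    simp only [Finset.mem_filter, Finset.mem_range, hback]
    exact ⟨by omega, by omega, (hs m (Finset.mem_of_mem_erase hm)).1⟩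
  have hinj : Set.InjOn (M - ·) (s.erase M) := fun a ha b hb hab => by
    have := s.le_max' a (Finset.mem_of_mem_erase ha)
    have := s.le_max' b (Finset.mem_of_mem_erase hb)
    simp only at hab
    omega
  have := Finset.card_le_card_of_injOn _ hreturn hinj
  rw [← Nat.count_eq_card_filter_range, Finset.card_erase_of_mem (s.max'_mem hne)] at this
  omega

theorem ae_pos_nthReturnTime [MeasurableSpace α] {μ : Measure α} (hf : Conservative f μ)
    (hP : MeasurableSet P) (k : ℕ) : ∀ᵐ z ∂μ, z ∈ P → 0 < nthReturnTime f P k z := by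
  filter_upwards [hf.ae_mem_imp_frequently_image_mem hP.nullMeasurableSet] with z hz hzP
  have hinf : {n | f^[n] z ∈ P}.Infinite := Nat.frequently_atTop_iff_infinite.mp (hz hzP)
  have hinf' : (Set.ofPred fun n => 1 ≤ n ∧ f^[n] z ∈ P).Infinite :=
    (hinf.sdiff (Set.finite_singleton 0)).mono fun n hn => ⟨Nat.one_le_iff_ne_zero.mpr hn.2, hn.1⟩
  exact (Nat.nth_mem_of_infinite hinf' k).1

end ReturnTime

theorem tsum_measure_le_of_card_le {α ι : Type*} [MeasurableSpace α] [Countable ι] (μ : Measure α)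
    {s : ι → Set α} (hs : ∀ n, MeasurableSet (s n)) {C : ℕ}
    (hC : ∀ z (t : Finset ι), (∀ n ∈ t, z ∈ s n) → t.card ≤ C) :
    ∑' n, μ (s n) ≤ C * μ Set.univ := by
  classical
  have hmult : ∀ z, ∑' n, (s n).indicator 1 z ≤ (C : ℝ≥0∞) := fun z => by
    rw [ENNReal.tsum_eq_iSup_sum]
    refine iSup_le fun t => ?_
    simp only [Set.indicator_apply, Pi.one_apply, Finset.sum_boole, Nat.cast_le]
    exact hC z _ fun n hn => (Finset.mem_filter.mp hn).2
  calc ∑' n, μ (s n) = ∫⁻ z, ∑' n, (s n).indicator 1 z ∂μ := by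
        rw [lintegral_tsum fun n => (measurable_one.indicator (hs n)).aemeasurable]
        simp only [lintegral_indicator_one (hs _)]
    _ ≤ ∫⁻ _, (C : ℝ≥0∞) ∂μ := lintegral_mono hmult
    _ = C * μ Set.univ := lintegral_const _

/-- The left-hand side is `∫_P n_{k+1} dμ` (a Kac-type bound). -/
theorem tsum_measure_lt_nthReturnTime_le {α : Type*} [MeasurableSpace α] {μ : Measure α}
    {F : α ≃ᵐ α} (hF : MeasurePreserving F μ μ) {P : Set α} (hP : MeasurableSet P) (k : ℕ) :
    ∑' n, μ {z | z ∈ P ∧ n < nthReturnTime F P k z} ≤ (k + 1) * μ Set.univ := by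
  set E : ℕ → Set α := fun n => {z | z ∈ P ∧ n < nthReturnTime F P k z}
  have hE : ∀ n, MeasurableSet (E n) := fun n =>
    hP.inter (measurableSet_lt measurable_const (measurable_nthReturnTime F.measurable hP k))
  calc ∑' n, μ (E n) = ∑' n, μ ((⇑F.symm)^[n] ⁻¹' E n) :=
        tsum_congr fun n =>
          (((hF.symm F).iterate n).measure_preimage (hE n).nullMeasurableSet).symm
    _ ≤ ((k + 1 : ℕ) : ℝ≥0∞) * μ Set.univ :=
        tsum_measure_le_of_card_le μ (fun n => F.symm.measurable.iterate n (hE n)) fun z t ht =>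
          card_le_of_forall_lt_nthReturnTime (fun x => F.apply_symm_apply x) ht
    _ = (k + 1) * μ Set.univ := by rw [Nat.cast_add_one]

theorem lintegral_tsum_condKernel_lt_nthReturnTime_le {X Y : Type*} [MeasurableSpace X]
    [MeasurableSpace Y] [StandardBorelSpace Y] [Nonempty Y] {μ : Measure (X × Y)}
    [IsFiniteMeasure μ] {F : (X × Y) ≃ᵐ (X × Y)} (hF : MeasurePreserving F μ μ)
    {P : Set (X × Y)} (hP : MeasurableSet P) (k : ℕ) :
    ∫⁻ x, ∑' n, μ.condKernel x {y | (x, y) ∈ P ∧ n < nthReturnTime F P k (x, y)} ∂μ.fst ≤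
      (k + 1) * μ Set.univ := by
  have hE : ∀ n, MeasurableSet {z | z ∈ P ∧ n < nthReturnTime F P k z} := fun n =>
    hP.inter (measurableSet_lt measurable_const (measurable_nthReturnTime F.measurable hP k))
  rw [lintegral_tsum fun n => ?_]
  · exact (tsum_congr fun n => Measure.lintegral_condKernel_mem (hE n)).trans_le
      (tsum_measure_lt_nthReturnTime_le hF hP k)
  · exact (Kernel.measurable_kernel_prodMk_left (hE n)).aemeasurable

theorem bddAbove_setOf_lt_of_tendsto {α : Type*} [LinearOrder α] [TopologicalSpace α]
    [OrderTopology α] {a : ℕ → α} {b c : α} (hbc : b < c) (ha : Tendsto a atTop (𝓝 b)) :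
    BddAbove {n | c < a n} := by
  obtain ⟨N, hN⟩ := eventually_atTop.mp (ha.eventually (gt_mem_nhds hbc))
  exact ⟨N, fun n hn => not_lt.mp fun hNn => (hN n hNn.le).not_gt hn⟩

theorem mul_sSup_setOf_lt_lt_tsum {a : ℕ → ℝ≥0∞} {c : ℝ≥0∞} (ha : Antitone a) (h1 : c < a 1)
    (hbdd : BddAbove {n | c < a n}) : c * (sSup {n | c < a n} : ℕ) < ∑' n, a (n + 1) := by
  set N := sSup {n | c < a n}
  have hN : c < a N := Nat.sSup_mem ⟨1, h1⟩ hbdd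
  have hN1 : 1 ≤ N := le_csSup hbdd h1
  calc c * N = ∑ _ ∈ Finset.range N, c := by simp [mul_comm]
    _ < ∑ n ∈ Finset.range N, a (n + 1) :=
        ENNReal.sum_lt_sum_of_nonempty (Finset.nonempty_range_iff.mpr (by omega)) fun n hn =>
          hN.trans_le (ha (Finset.mem_range.mp hn))
    _ ≤ ∑' n, a (n + 1) := ENNReal.sum_le_tsum _

theorem Measure.ae_ae_condKernel_of_ae {X Y : Type*} [MeasurableSpace X] [MeasurableSpace Y]
    [StandardBorelSpace Y] [Nonempty Y] {μ : Measure (X × Y)} [IsFiniteMeasure μ]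
    {p : X × Y → Prop} (h : ∀ᵐ z ∂μ, p z) : ∀ᵐ x ∂μ.fst, ∀ᵐ y ∂μ.condKernel x, p (x, y) := by
  rw [← μ.disintegrate μ.condKernel] at h
  exact Measure.ae_ae_of_ae_compProd h

theorem integrable_natCast_and_integral_lt_div {α : Type*} [MeasurableSpace α] {μ : Measure α}
    {f : α → ℕ} (hf : Measurable f) {c : ℝ} (hc : 0 < c) {l : ℕ}
    (h : ENNReal.ofReal c * ∫⁻ x, f x ∂μ < l) :
    Integrable (fun x => (f x : ℝ)) μ ∧ ∫ x, (f x : ℝ) ∂μ < l / c := by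
  have hf' : AEMeasurable (fun x => (f x : ℝ≥0∞)) μ := (measurable_from_nat.comp hf).aemeasurable
  have hfin : ∫⁻ x, f x ∂μ ≠ ⊤ := fun htop => by
    simp [htop, ENNReal.mul_top (ENNReal.ofReal_pos.mpr hc).ne'] at h
  refine ⟨by simpa using integrable_toReal_of_lintegral_ne_top hf' hfin, ?_⟩
  have hint : ∫ x, (f x : ℝ) ∂μ = (∫⁻ x, f x ∂μ).toReal := by
    simpa using integral_toReal hf' (ae_of_all _ fun x => ENNReal.natCast_lt_top (f x))
  rw [hint, lt_div_iff₀ hc, mul_comm, ← ENNReal.toReal_ofReal hc.le, ← ENNReal.toReal_mul]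
  simpa using ENNReal.toReal_strict_mono (ENNReal.natCast_ne_top l) h

theorem setLIntegral_lt_of_ae_lt {α : Type*} [MeasurableSpace α] {μ : Measure α} {s : Set α}
    {f g : α → ℝ≥0∞} (hs : MeasurableSet s) (hμs : μ s ≠ 0) (hg : Measurable g)
    (hgs : ∫⁻ x in s, g x ∂μ ≠ ⊤) (hfg : ∀ᵐ x ∂μ, x ∈ s → f x < g x) :
    ∫⁻ x in s, f x ∂μ < ∫⁻ x in s, g x ∂μ :=
  setLIntegral_strict_mono hs hμs hg
    (ne_top_of_le_ne_top hgs (setLIntegral_mono_ae' hs (hfg.mono fun _ h hx => (h hx).le))) hfg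

theorem stmt_0_general
    {X Y : Type*} [MeasurableSpace X] [MeasurableSpace Y]
    [StandardBorelSpace Y] [Nonempty Y]
    (μ : Measure (X × Y)) [IsProbabilityMeasure μ]
    (ν : Measure X) (hνμ : μ.fst = ν)
    (F : (X × Y) ≃ᵐ (X × Y)) (hF : MeasurePreserving F μ μ)
    (B : Set X) (hB : MeasurableSet B) (hBpos : 0 < ν B)
    (P : Set (X × Y)) (hPmeas : MeasurableSet P)
    (σ₀ : ℝ) (hσ₀ : 0 < σ₀)
    (hfib : ∀ᵐ x ∂ν, x ∈ B →
      ENNReal.ofReal σ₀ < μ.condKernel x {y : Y | (x, y) ∈ P})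
    (l : ℕ) (hl : 1 ≤ l)
    (nl : X × Y → ℕ)
    (hnl : ∀ z, nl z = Nat.nth (fun n => 1 ≤ n ∧ (⇑F)^[n] z ∈ P) (l - 1))
    (Nl : X → ℕ)
    (hNl : ∀ x, Nl x = sSup {n : ℕ | ENNReal.ofReal σ₀ <
      μ.condKernel x {y : Y | (x, y) ∈ P ∧ n ≤ nl (x, y)}}) :
    (∀ᵐ x ∂ν, x ∈ B → BddAbove {n : ℕ | ENNReal.ofReal σ₀ <
      μ.condKernel x {y : Y | (x, y) ∈ P ∧ n ≤ nl (x, y)}}) ∧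
    IntegrableOn (fun x => (Nl x : ℝ)) B ν ∧
    ∫ x in B, (Nl x : ℝ) ∂ν < l / σ₀ := by
  obtain rfl : nl = nthReturnTime F P (l - 1) := funext hnl
  set c := ENNReal.ofReal σ₀
  set g : ℕ → X → ℝ≥0∞ := fun n x =>
    μ.condKernel x {y | (x, y) ∈ P ∧ n ≤ nthReturnTime F P (l - 1) (x, y)}
  have hg : ∀ n, Measurable (g n) := fun n => Kernel.measurable_kernel_prodMk_left <|
    hPmeas.inter <| measurableSet_le measurable_const <|
      measurable_nthReturnTime F.measurable hPmeas _
  have hN : Measurable Nl :=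
    funext hNl ▸ measurable_sSup_setOf_nat fun n => measurable_const.lt (hg n)
  have hG : ∫⁻ x, ∑' n, g (n + 1) x ∂ν ≤ l := by
    have := lintegral_tsum_condKernel_lt_nthReturnTime_le hF hPmeas (l - 1)
    rwa [hνμ, ← Nat.cast_add_one, Nat.sub_add_cancel hl, measure_univ, mul_one] at this
  have hg1 : ∀ᵐ x ∂ν, x ∈ B → c < g 1 x := by
    have hpos := hνμ ▸ Measure.ae_ae_condKernel_of_ae
      (ae_pos_nthReturnTime hF.conservative hPmeas (l - 1))
    filter_upwards [hfib, hpos] with x hx hpos hxB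
    exact (hx hxB).trans_le (measure_mono_ae (hpos.mono fun y hy hyP => ⟨hyP, hy hyP⟩))
  have hbdd : ∀ᵐ x ∂ν, x ∈ B → BddAbove {n | c < g n x} := by
    have hfin := ae_lt_top (.tsum fun n => hg (n + 1)) (hG.trans_lt (ENNReal.natCast_lt_top l)).ne
    filter_upwards [hfin] with x hx _
    exact bddAbove_setOf_lt_of_tendsto (ENNReal.ofReal_pos.mpr hσ₀)
      ((tendsto_add_atTop_iff_nat 1).mp (ENNReal.tendsto_atTop_zero_of_tsum_ne_top hx.ne))
  have hlt : ∀ᵐ x ∂ν, x ∈ B → c * Nl x < ∑' n, g (n + 1) x := by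
    filter_upwards [hg1, hbdd] with x h1 hb hxB
    rw [hNl x]
    refine mul_sSup_setOf_lt_lt_tsum (fun m n hmn => ?_) (h1 hxB) (hb hxB)
    exact measure_mono fun y hy => ⟨hy.1, hmn.trans hy.2⟩
  have hGB : ∫⁻ x in B, ∑' n, g (n + 1) x ∂ν ≤ l := (setLIntegral_le_lintegral _ _).trans hG
  have hint : c * ∫⁻ x in B, Nl x ∂ν < l := by
    rw [← lintegral_const_mul' _ _ ENNReal.ofReal_ne_top]
    exact (setLIntegral_lt_of_ae_lt hB hBpos.ne' (.tsum fun n => hg (n + 1))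
      (hGB.trans_lt (ENNReal.natCast_lt_top l)).ne hlt).trans_le hGB
  exact ⟨hbdd, integrable_natCast_and_integral_lt_div hN hσ₀ hint⟩

/-- Integrability of the return time along fibers.
`(X, ν)` is a probability space, `Y` a standard Borel space, `μ` a probability
measure on `X × Y` projecting to `ν`, with disintegration given by the
conditional kernel `μ.condKernel` (so `σ_x = μ.condKernel x`).  `F` is an
invertible bi-measurable transformation preserving `μ`.  For `l ≥ 1`,
`nl z` is the `l`-th return time of `z` to `P` (the `l`-th smallest `n ≥ 1`
with `F^n z ∈ P`, encoded via `Nat.nth`).  `Nl x` is the supremum of those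
`n` with `σ_x(Pₙˡ(x)) > σ₀`, where `Pₙˡ(x) = {y ∈ P(x) : nl (x,y) ≥ n}`.
Then `Nl` is finite a.e. on `B` (the defining set is bounded above),
integrable on `B`, and `∫_B Nl dν < l / σ₀`. -/
theorem stmt_0
    {X Y : Type*} [MeasurableSpace X] [MeasurableSpace Y]
    [StandardBorelSpace Y] [Nonempty Y]
    (μ : Measure (X × Y)) [IsProbabilityMeasure μ]
    (ν : Measure X) (hνμ : μ.fst = ν)
    (F : (X × Y) ≃ᵐ (X × Y)) (hF : MeasurePreserving F μ μ)
    (B : Set X) (hB : MeasurableSet B) (hBpos : 0 < ν B)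
    (P : Set (X × Y)) (hPmeas : MeasurableSet P)
    (hPB : P ⊆ B ×ˢ (Set.univ : Set Y))
    (σ₀ : ℝ) (hσ₀ : 0 < σ₀)
    (hfib : ∀ᵐ x ∂ν, x ∈ B →
      ENNReal.ofReal σ₀ < μ.condKernel x {y : Y | (x, y) ∈ P})
    (l : ℕ) (hl : 1 ≤ l)
    (nl : X × Y → ℕ)
    (hnl : ∀ z, nl z = Nat.nth (fun n => 1 ≤ n ∧ (⇑F)^[n] z ∈ P) (l - 1))
    (Nl : X → ℕ)
    (hNl : ∀ x, Nl x = sSup {n : ℕ | ENNReal.ofReal σ₀ <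
      μ.condKernel x {y : Y | (x, y) ∈ P ∧ n ≤ nl (x, y)}}) :
    (∀ᵐ x ∂ν, x ∈ B → BddAbove {n : ℕ | ENNReal.ofReal σ₀ <
      μ.condKernel x {y : Y | (x, y) ∈ P ∧ n ≤ nl (x, y)}}) ∧
    IntegrableOn (fun x => (Nl x : ℝ)) B ν ∧
    ∫ x in B, (Nl x : ℝ) ∂ν < l / σ₀ :=
  stmt_0_general μ ν hνμ F hF B hB hBpos P hPmeas σ₀ hσ₀ hfib l hl nl hnl Nl hNl
end

section
/- For ν-a.e. x ∈ B, the set H(x) := ⋂_{x' ≾ x} O⁺(x') is nonempty; that is, there exists a point x* ∈ B lying on the forward g̃-orbit of every x' with x' ≾ x. Moreover, if x₁ ≾ x₂ then H(x₁) ⊃ H(x₂). -/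
open MeasureTheory
open scoped ENNReal

/-- The first return time of `x` to `B` under `g` (the smallest `n ≥ 1`
with `g^[n] x ∈ B`; junk value `0` if there is no return). -/
noncomputable def firstRetTime {X : Type*} (g : X → X) (B : Set X) (x : X) : ℕ :=
  sInf {n : ℕ | 1 ≤ n ∧ g^[n] x ∈ B}

/-- The first return map `g_B` of `g` on `B`. -/
noncomputable def firstRetMap {X : Type*} (g : X → X) (B : Set X) (x : X) : X :=
  g^[firstRetTime g B x] x

/-- The partial order `x₁ ≺ x₂`: `x₂` is an image of `x₁` under iterates of
the first return map `g_B`. -/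
def precRel {X : Type*} (g : X → X) (B : Set X) (x₁ x₂ : X) : Prop :=
  ∃ n : ℕ, (firstRetMap g B)^[n] x₁ = x₂

/-- The forward orbit `O⁺(x)` of `x` under `g̃`. -/
def fwdOrbit {X : Type*} (gt : X → X) (x : X) : Set X :=
  {y | ∃ k : ℕ, gt^[k] x = y}

/-- The equivalence relation `x₁ ∼ x₂`: the forward `g̃`-orbits of `x₁` and
`x₂` intersect. -/
def simRel {X : Type*} (gt : X → X) (x₁ x₂ : X) : Prop :=
  (fwdOrbit gt x₁ ∩ fwdOrbit gt x₂).Nonempty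

/-- `x₁ ≾ x₂` iff `x₁ ≺ x₂` and `x₁ ∼ x₂`. -/
def precsim {X : Type*} (g : X → X) (B : Set X) (gt : X → X) (x₁ x₂ : X) : Prop :=
  precRel g B x₁ x₂ ∧ simRel gt x₁ x₂

/-- `H(x) = ⋂_{x' ≾ x} O⁺(x')`, the intersection of the forward `g̃`-orbits
of all predecessors of `x`. -/
def Hset {X : Type*} (g : X → X) (B : Set X) (gt : X → X) (x : X) : Set X :=
  ⋂ x' ∈ {x' ∈ B | precsim g B gt x' x}, fwdOrbit gt x'

/- Auxiliary lemmas -/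

lemma coe_iter_pow {X : Type*} [MeasurableSpace X] (g : X ≃ᵐ X) (n : ℕ) (y : X) :
    (⇑g)^[n] y = (g.toEquiv ^ (n : ℤ)) y := by
  rw [zpow_natCast, Equiv.Perm.coe_pow]; rfl

lemma coe_symm_iter_pow {X : Type*} [MeasurableSpace X] (g : X ≃ᵐ X) (n : ℕ) (y : X) :
    (⇑g.symm)^[n] y = (g.toEquiv ^ (-(n : ℤ))) y := by
  rw [zpow_neg, zpow_natCast, ← inv_pow, Equiv.Perm.coe_pow]; rfl

lemma pow_apply_pow {X : Type*} [MeasurableSpace X] (g : X ≃ᵐ X) (a b : ℤ) (y : X) :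
    (g.toEquiv ^ a) ((g.toEquiv ^ b) y) = (g.toEquiv ^ (a + b)) y := by
  rw [zpow_add, Equiv.Perm.mul_apply]

lemma pow_zero_apply {X : Type*} [MeasurableSpace X] (g : X ≃ᵐ X) (y : X) :
    (g.toEquiv ^ (0 : ℤ)) y = y := by
  rw [zpow_zero]; rfl

/-- The key deterministic lemma. -/
lemma stmt4_det {X : Type*} [MeasurableSpace X] (g : X ≃ᵐ X) (B : Set X)
    (N : X → ℕ) (gt : X → X) (hgt : ∀ x, gt x = (⇑g)^[N x] x) (x : X) (hx : x ∈ B)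
    (hfree : ∀ a b : ℤ, (g.toEquiv ^ a) x = (g.toEquiv ^ b) x → a = b)
    (horb : ∀ a : ℤ, (g.toEquiv ^ a) x ∈ B →
      1 ≤ N ((g.toEquiv ^ a) x) ∧ (⇑g)^[N ((g.toEquiv ^ a) x)] ((g.toEquiv ^ a) x) ∈ B)
    (hfin : {m : ℕ | (g.toEquiv ^ (-(m + 1) : ℤ)) x ∈ B ∧
      m + 1 ≤ N ((g.toEquiv ^ (-(m + 1) : ℤ)) x)}.Finite) :
    (Hset (⇑g) B gt x).Nonempty := by
  classical
  set P := g.toEquiv with hP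
  have Pzero : ∀ y : X, (P ^ (0 : ℤ)) y = y := pow_zero_apply g
  have Padd : ∀ (a b : ℤ) (y : X), (P ^ a) ((P ^ b) y) = (P ^ (a + b)) y := pow_apply_pow g
  have Piter : ∀ (n : ℕ) (y : X), (⇑g)^[n] y = (P ^ (n : ℤ)) y := coe_iter_pow g
  set φ : ℤ → ℤ := fun c => c + (N ((P ^ c) x) : ℤ) with hφ
  -- trajectory lemma
  have T1 : ∀ (k : ℕ) (c : ℤ), (P ^ c) x ∈ B →
      gt^[k] ((P ^ c) x) = (P ^ (φ^[k] c)) x ∧ (P ^ (φ^[k] c)) x ∈ B := by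
    intro k
    induction k with
    | zero => intro c hc; exact ⟨rfl, hc⟩
    | succ k ih =>
      intro c hc
      obtain ⟨heq, hmem⟩ := ih c hc
      set d := φ^[k] c with hd
      have hstep : gt ((P ^ d) x) = (P ^ (φ d)) x := by
        rw [hgt, Piter, Padd]
        simp only [hφ]
        rw [add_comm]
      have hmem' : (P ^ (φ d)) x ∈ B := by
        have := (horb d hmem).2
        rw [Piter, Padd] at this
        simpa only [hφ, add_comm] using this
      constructor
      · rw [Function.iterate_succ_apply', heq, hstep, Function.iterate_succ_apply']
      · rw [Function.iterate_succ_apply']; exact hmem'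
  -- growth lemma
  have T2 : ∀ (k : ℕ) (c : ℤ), (P ^ c) x ∈ B → c + k ≤ φ^[k] c := by
    intro k
    induction k with
    | zero => intro c hc; simp
    | succ k ih =>
      intro c hc
      have hmem := (T1 k c hc).2
      have h1 : 1 ≤ N ((P ^ (φ^[k] c)) x) := (horb _ hmem).1
      have := ih c hc
      rw [Function.iterate_succ_apply']
      have : φ (φ^[k] c) = φ^[k] c + (N ((P ^ (φ^[k] c)) x) : ℤ) := rfl
      rw [this]
      push_cast
      omega
  -- precRel gives nonpositive position
  have T3 : ∀ (n : ℕ) (z : X), z ∈ B → (firstRetMap (⇑g) B)^[n] z = x →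
      ∃ t : ℕ, z = (P ^ (-(t : ℤ))) x := by
    intro n
    induction n with
    | zero =>
      intro z hz h
      refine ⟨0, ?_⟩
      simp only [Function.iterate_zero_apply] at h
      simp only [Nat.cast_zero, neg_zero, Pzero]
      exact h
    | succ n ih =>
      intro z hz h
      rw [Function.iterate_succ_apply] at h
      set r := firstRetTime (⇑g) B z with hr
      have hfz : firstRetMap (⇑g) B z = (⇑g)^[r] z := rfl
      have hfzB : firstRetMap (⇑g) B z ∈ B := by
        by_cases hne : {n : ℕ | 1 ≤ n ∧ (⇑g)^[n] z ∈ B}.Nonempty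
        · exact (Nat.sInf_mem hne).2
        · rw [Set.not_nonempty_iff_eq_empty] at hne
          rw [hfz, hr, firstRetTime, hne, Nat.sInf_empty]
          exact hz
      obtain ⟨t, ht⟩ := ih _ hfzB h
      refine ⟨t + r, ?_⟩
      have : (⇑g)^[r] z = (P ^ (-(t : ℤ))) x := by rw [← hfz, ht]
      rw [Piter] at this
      have h2 : (P ^ (-(r : ℤ))) ((P ^ (r : ℤ)) z) = (P ^ (-(r : ℤ))) ((P ^ (-(t : ℤ))) x) := by
        rw [this]
      rw [Padd, Padd] at h2
      simp only [neg_add_cancel, Pzero] at h2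
      rw [h2]
      congr 1
      push_cast
      ring_nf
  -- the meeting-depth set for a position
  set S : ℤ → Set ℕ := fun c => {j : ℕ | ∃ k : ℕ, φ^[k] c = φ^[j] (0 : ℤ)} with hS
  have hx0 : (P ^ (0 : ℤ)) x ∈ B := by rw [Pzero]; exact hx
  -- orbit identification
  have horbit : ∀ (j : ℕ), gt^[j] x = (P ^ (φ^[j] (0:ℤ))) x := by
    intro j
    have := (T1 j 0 hx0).1
    rwa [Pzero] at this
  -- ψ maps crossings to depths
  set ψ : ℕ → ℕ := fun m => sInf (S (-(m + 1) : ℤ)) with hψ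
  obtain ⟨J, hJ⟩ : ∃ J : ℕ, ∀ j ∈ insert 0 (ψ '' {m : ℕ | (P ^ (-(m + 1) : ℤ)) x ∈ B ∧
      m + 1 ≤ N ((P ^ (-(m + 1) : ℤ)) x)}), j ≤ J := by
    have hfin2 : (insert 0 (ψ '' {m : ℕ | (P ^ (-(m + 1) : ℤ)) x ∈ B ∧
        m + 1 ≤ N ((P ^ (-(m + 1) : ℤ)) x)})).Finite := (hfin.image ψ).insert 0
    obtain ⟨J, hJ⟩ := hfin2.bddAbove
    exact ⟨J, fun j hj => hJ hj⟩
  -- main claim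
  have main : ∀ x' ∈ B, precsim (⇑g) B gt x' x → ∃ k : ℕ, gt^[k] x' = gt^[J] x := by
    intro x' hx' ⟨hprec, hsim⟩
    obtain ⟨n, hn⟩ := hprec
    obtain ⟨t, ht⟩ := T3 n x' hx' hn
    set c : ℤ := -(t : ℤ) with hc
    have hcB : (P ^ c) x ∈ B := ht ▸ hx'
    -- S c is nonempty
    have hSne : (S c).Nonempty := by
      obtain ⟨y, ⟨k, hk⟩, ⟨j, hj⟩⟩ := hsim
      refine ⟨j, k, ?_⟩
      have h1 : gt^[k] x' = gt^[j] x := by rw [hk, hj]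
      rw [ht, (T1 k c hcB).1, horbit j] at h1
      exact hfree _ _ h1
    set j₀ := sInf (S c) with hj₀
    have hj₀mem : j₀ ∈ S c := Nat.sInf_mem hSne
    -- j₀ is in the finite index set
    have hj₀J : j₀ ≤ J := by
      rcases Nat.eq_zero_or_pos j₀ with h0 | hpos
      · rw [h0]; exact hJ 0 (Set.mem_insert _ _)
      · -- crossing construction
        obtain ⟨k, hk⟩ := hj₀mem
        have hct : c ≤ -1 := by
          rcases Nat.eq_zero_or_pos t with ht0 | htpos
          · exfalso
            have : (0 : ℕ) ∈ S c := ⟨0, by simp [hc, ht0]⟩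
            have : j₀ = 0 := Nat.le_zero.mp (Nat.sInf_le this)
            omega
          · simp only [hc]; omega
        set I : Finset ℕ := (Finset.range (k + 1)).filter (fun i => φ^[i] c ≤ -1) with hI
        have h0I : 0 ∈ I := by
          simp only [hI, Finset.mem_filter, Finset.mem_range]
          exact ⟨by omega, by simpa using hct⟩
        have hIne : I.Nonempty := ⟨0, h0I⟩
        set i₀ := I.max' hIne with hi₀
        have hi₀I : i₀ ∈ I := I.max'_mem hIne
        have hi₀range : i₀ < k + 1 := (Finset.mem_filter.mp hi₀I).1 |> Finset.mem_range.mp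
        have hi₀le : φ^[i₀] c ≤ -1 := (Finset.mem_filter.mp hi₀I).2
        have hkpos : (1 : ℤ) ≤ φ^[k] c := by
          rw [hk]
          have := T2 j₀ 0 hx0
          omega
        have hi₀k : i₀ < k := by
          rcases Nat.lt_or_ge i₀ k with h | h
          · exact h
          · exfalso
            have : i₀ = k := by omega
            rw [this] at hi₀le
            omega
        have hnext : ¬ (φ^[i₀ + 1] c ≤ -1) := by
          intro hcon
          have : i₀ + 1 ∈ I := by
            simp only [hI, Finset.mem_filter, Finset.mem_range]
            exact ⟨by omega, hcon⟩
          have := I.le_max' _ this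
          omega
        set p := φ^[i₀] c with hp
        have hpB : (P ^ p) x ∈ B := (T1 i₀ c hcB).2
        have hpnext : φ^[i₀ + 1] c = p + (N ((P ^ p) x) : ℤ) := by
          rw [Function.iterate_succ_apply']
        have hNbig : -p ≤ (N ((P ^ p) x) : ℤ) := by
          have : (0:ℤ) ≤ φ^[i₀ + 1] c := by omega
          rw [hpnext] at this
          omega
        set m := (-p - 1).toNat with hm
        have hmp : -((m : ℤ) + 1) = p := by
          have : ((-p - 1).toNat : ℤ) = -p - 1 := Int.toNat_of_nonneg (by omega)
          omega
        have hmF : m ∈ {m : ℕ | (P ^ (-(m + 1) : ℤ)) x ∈ B ∧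
            m + 1 ≤ N ((P ^ (-(m + 1) : ℤ)) x)} := by
          constructor
          · rw [show (-(m + 1) : ℤ) = p from hmp]; exact hpB
          · rw [show (-(m + 1) : ℤ) = p from hmp]
            have : ((m : ℤ) + 1) ≤ (N ((P ^ p) x) : ℤ) := by omega
            exact_mod_cast this
        -- ψ m = j₀
        have hiter : ∀ k'' : ℕ, φ^[k''] p = φ^[k'' + i₀] c := by
          intro k''
          rw [Function.iterate_add_apply]
        have hSsub : S p ⊆ S c := by
          rintro j ⟨k'', hk''⟩
          exact ⟨k'' + i₀, by rw [← hiter, hk'']⟩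
        have hj₀Sp : j₀ ∈ S p := by
          refine ⟨k - i₀, ?_⟩
          rw [hiter (k - i₀)]
          rw [show k - i₀ + i₀ = k from by omega]
          exact hk
        have hψm : ψ m = j₀ := by
          have h1 : ψ m ≤ j₀ := by
            simp only [hψ]
            rw [show (-(m + 1) : ℤ) = p from hmp]
            exact Nat.sInf_le hj₀Sp
          have h2 : j₀ ≤ ψ m := by
            have hne : (S p).Nonempty := ⟨j₀, hj₀Sp⟩
            have : ψ m ∈ S p := by
              simp only [hψ]
              rw [show (-(m + 1) : ℤ) = p from hmp]
              exact Nat.sInf_mem hne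
            exact Nat.sInf_le (hSsub this)
          omega
        exact hJ j₀ (Set.mem_insert_iff.mpr (Or.inr ⟨m, hmF, hψm⟩))
    -- produce the witness
    obtain ⟨k, hk⟩ := hj₀mem
    refine ⟨(J - j₀) + k, ?_⟩
    have h1 : gt^[k] x' = gt^[j₀] x := by
      rw [ht, (T1 k c hcB).1, horbit j₀, hk]
    rw [Function.iterate_add_apply, h1, ← Function.iterate_add_apply]
    congr 1
    omega
  refine ⟨gt^[J] x, ?_⟩
  rw [Hset]
  simp only [Set.mem_iInter, Set.mem_setOf_eq]
  rintro x' ⟨hx'B, hps⟩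
  exact main x' hx'B hps

lemma free_of_aperiodic {X : Type*} [MeasurableSpace X] (g : X ≃ᵐ X) (x : X)
    (h : ∀ n : ℕ, 1 ≤ n → (⇑g)^[n] x ≠ x) :
    ∀ a b : ℤ, (g.toEquiv ^ a) x = (g.toEquiv ^ b) x → a = b := by
  have key : ∀ k : ℤ, 0 < k → (g.toEquiv ^ k) x ≠ x := by
    intro k hk hcon
    have hn : ((k.toNat : ℤ)) = k := Int.toNat_of_nonneg (by omega)
    apply h k.toNat (by omega)
    rw [coe_iter_pow, hn, hcon]
  have key2 : ∀ k : ℤ, (g.toEquiv ^ k) x = x → k = 0 := by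
    intro k hk
    by_contra hne
    rcases lt_or_gt_of_ne hne with hlt | hgt
    · have h2 : (g.toEquiv ^ (-k)) ((g.toEquiv ^ k) x) = (g.toEquiv ^ (-k)) x := by rw [hk]
      rw [pow_apply_pow, neg_add_cancel, pow_zero_apply] at h2
      exact key (-k) (by omega) h2.symm
    · exact key k hgt hk
  intro a b hab
  have h2 : (g.toEquiv ^ (-b)) ((g.toEquiv ^ a) x) = (g.toEquiv ^ (-b)) ((g.toEquiv ^ b) x) := by
    rw [hab]
  rw [pow_apply_pow, pow_apply_pow, neg_add_cancel, pow_zero_apply] at h2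
  have := key2 _ h2
  omega


/-- cf. [Sun], Proposition 4.1.  With `g` an invertible
bi-measurable measure-preserving transformation of the probability space
`(X, ν)`, a.e. point non-periodic, `B` of positive measure, `N ≥ 1` on `B`
measurable with `g̃ x = g^[N x] x ∈ B` for a.e. `x ∈ B` and `∫_B N dν < ∞`:
for ν-a.e. `x ∈ B` the set `H(x)` is nonempty (there is `x*` on the forward
`g̃`-orbit of every `x' ≾ x`), and `x₁ ≾ x₂` implies `H(x₁) ⊇ H(x₂)`. -/
theorem stmt_4 {X : Type*} [MeasurableSpace X]
    (ν : Measure X) [IsProbabilityMeasure ν]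
    (g : X ≃ᵐ X) (hg : MeasurePreserving g ν ν)
    (hper : ∀ᵐ x ∂ν, ∀ n : ℕ, 1 ≤ n → (⇑g)^[n] x ≠ x)
    (B : Set X) (hB : MeasurableSet B) (hBpos : 0 < ν B)
    (N : X → ℕ) (hNmeas : Measurable N) (hN1 : ∀ x ∈ B, 1 ≤ N x)
    (hret : ∀ᵐ x ∂ν, x ∈ B → (⇑g)^[N x] x ∈ B)
    (hint : ∫⁻ x in B, (N x : ℝ≥0∞) ∂ν < ⊤)
    (gt : X → X) (hgt : ∀ x, gt x = (⇑g)^[N x] x) :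
    (∀ᵐ x ∂ν, x ∈ B → (Hset (⇑g) B gt x).Nonempty) ∧
    (∀ x₁ ∈ B, ∀ x₂ ∈ B, precsim (⇑g) B gt x₁ x₂ →
      Hset (⇑g) B gt x₂ ⊆ Hset (⇑g) B gt x₁) := by
  classical
  constructor
  · -- the a.e. statement
    -- measure preserving powers
    have hsymm : MeasurePreserving (⇑g.symm) ν ν := MeasurePreserving.symm g hg
    have hPa : ∀ a : ℤ, MeasurePreserving (fun y => (g.toEquiv ^ a) y) ν ν := by
      intro a
      cases a with
      | ofNat n =>
        have : (fun y => (g.toEquiv ^ (Int.ofNat n)) y) = (⇑g)^[n] := by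
          funext y
          rw [Int.ofNat_eq_natCast, ← coe_iter_pow]
        rw [this]
        exact hg.iterate n
      | negSucc n =>
        have : (fun y => (g.toEquiv ^ (Int.negSucc n)) y) = (⇑g.symm)^[n+1] := by
          funext y
          rw [Int.negSucc_eq, show (-(↑n + 1) : ℤ) = -(((n+1 : ℕ) : ℤ)) from by push_cast; omega,
            ← coe_symm_iter_pow]
        rw [this]
        exact hsymm.iterate (n+1)
    -- orbit-wise return property
    have h2 : ∀ᵐ x ∂ν, ∀ a : ℤ, (g.toEquiv ^ a) x ∈ B →
        (⇑g)^[N ((g.toEquiv ^ a) x)] ((g.toEquiv ^ a) x) ∈ B := by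
      rw [ae_all_iff]
      intro a
      exact ((hPa a).quasiMeasurePreserving).ae hret
    -- Borel-Cantelli
    set S : ℕ → Set X := fun m => B ∩ {z | m + 1 ≤ N z} with hS
    have hSmeas : ∀ m : ℕ, MeasurableSet (S m) := by
      intro m
      exact hB.inter (measurableSet_le measurable_const hNmeas)
    set E : ℕ → Set X := fun m => (⇑g.symm)^[m+1] ⁻¹' (S m) with hE
    have hrange : ∀ M : ℕ, ∑ m ∈ Finset.range M, ν (S m) ≤ ∫⁻ z in B, (N z : ℝ≥0∞) ∂ν := by
      intro M
      have h1 : ∀ m : ℕ, ν (S m) = ∫⁻ z, ({z | m + 1 ≤ N z}).indicator 1 z ∂(ν.restrict B) := by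
        intro m
        rw [lintegral_indicator_one (measurableSet_le measurable_const hNmeas),
          Measure.restrict_apply (measurableSet_le measurable_const hNmeas), Set.inter_comm]
      calc ∑ m ∈ Finset.range M, ν (S m)
          = ∑ m ∈ Finset.range M, ∫⁻ z, ({z | m + 1 ≤ N z}).indicator 1 z ∂(ν.restrict B) := by
            exact Finset.sum_congr rfl fun m _ => h1 m
        _ = ∫⁻ z, ∑ m ∈ Finset.range M, ({z | m + 1 ≤ N z}).indicator 1 z ∂(ν.restrict B) := by
            rw [lintegral_finset_sum]
            intro m _
            exact measurable_one.indicator (measurableSet_le measurable_const hNmeas)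
        _ ≤ ∫⁻ z, (N z : ℝ≥0∞) ∂(ν.restrict B) := by
            apply lintegral_mono
            intro z
            calc ∑ m ∈ Finset.range M, ({z | m + 1 ≤ N z}).indicator (1 : X → ℝ≥0∞) z
                = ∑ m ∈ Finset.range M, if m + 1 ≤ N z then (1 : ℝ≥0∞) else 0 := by
                  refine Finset.sum_congr rfl fun m _ => ?_
                  simp [Set.indicator_apply]
              _ = (((Finset.range M).filter (fun m => m + 1 ≤ N z)).card : ℝ≥0∞) := by
                  rw [Finset.sum_boole]
              _ ≤ ((N z : ℕ) : ℝ≥0∞) := by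
                  have hsub : (Finset.range M).filter (fun m => m + 1 ≤ N z) ⊆
                      Finset.range (N z) := by
                    intro m hm
                    simp only [Finset.mem_filter, Finset.mem_range] at hm ⊢
                    omega
                  have := Finset.card_le_card hsub
                  rw [Finset.card_range] at this
                  exact_mod_cast this
    have hsum : ∑' m, ν (E m) ≠ ∞ := by
      have hEm : ∀ m, ν (E m) = ν (S m) := by
        intro m
        exact (hsymm.iterate (m+1)).measure_preimage (hSmeas m).nullMeasurableSet
      have : ∑' m, ν (E m) ≤ ∫⁻ z in B, (N z : ℝ≥0∞) ∂ν := by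
        simp_rw [hEm]
        rw [ENNReal.tsum_eq_iSup_sum]
        refine iSup_le fun s => ?_
        refine le_trans (Finset.sum_le_sum_of_subset (fun i hi => Finset.mem_range.mpr
          (Nat.lt_succ_of_le (Finset.le_sup (f := id) hi)))) (hrange _)
      exact ne_top_of_le_ne_top hint.ne this
    have hBC := ae_finite_setOf_mem (μ := ν) hsum
    -- combine
    filter_upwards [hper, h2, hBC] with x hx1 hx2 hx3 hxB
    apply stmt4_det g B N gt hgt x hxB
    · exact free_of_aperiodic g x hx1
    · intro a ha
      exact ⟨hN1 _ ha, hx2 a ha⟩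
    · have hEq : ∀ m : ℕ, (⇑g.symm)^[m+1] x = (g.toEquiv ^ (-(m + 1) : ℤ)) x := by
        intro m
        rw [coe_symm_iter_pow]
        norm_num
      have hsets : {m : ℕ | (g.toEquiv ^ (-(m + 1) : ℤ)) x ∈ B ∧
          m + 1 ≤ N ((g.toEquiv ^ (-(m + 1) : ℤ)) x)} = {m : ℕ | x ∈ E m} := by
        ext m
        simp only [Set.mem_setOf_eq, hE, Set.mem_preimage, hS, Set.mem_inter_iff, hEq m]
      rw [hsets]
      exact hx3
  · -- monotonicity
    intro x₁ hx₁ x₂ hx₂ h12 y hy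
    rw [Hset] at hy ⊢
    simp only [Set.mem_iInter, Set.mem_setOf_eq] at hy ⊢
    rintro x' ⟨hx'B, hps⟩
    apply hy x'
    refine ⟨hx'B, ?_, ?_⟩
    · obtain ⟨n, hn⟩ := hps.1
      obtain ⟨m, hm⟩ := h12.1
      exact ⟨m + n, by rw [Function.iterate_add_apply, hn, hm]⟩
    · obtain ⟨y₁, ⟨i, hi⟩, ⟨j, hj⟩⟩ := hps.2
      obtain ⟨y₂, ⟨k, hk⟩, ⟨l, hl⟩⟩ := h12.2
      refine ⟨gt^[k + i] x', ⟨k + i, rfl⟩, ⟨j + l, ?_⟩⟩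
      have e1 : gt^[i] x' = gt^[j] x₁ := by rw [hi, hj]
      have e2 : gt^[l] x₂ = gt^[k] x₁ := by rw [hl, hk]
      calc gt^[j + l] x₂ = gt^[j] (gt^[l] x₂) := Function.iterate_add_apply gt j l x₂
        _ = gt^[j] (gt^[k] x₁) := by rw [e2]
        _ = gt^[j + k] x₁ := (Function.iterate_add_apply gt j k x₁).symm
        _ = gt^[k + j] x₁ := by rw [add_comm]
        _ = gt^[k] (gt^[j] x₁) := Function.iterate_add_apply gt k j x₁
        _ = gt^[k] (gt^[i] x') := by rw [e1]
        _ = gt^[k + i] x' := (Function.iterate_add_apply gt k i x').symm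
end

section
/- For ν-a.e. x ∈ B there exists a point x' ∈ B with x' ≾ x and x' ≠ x. Consequently, for ν-a.e. x ∈ B there are infinitely many points x' ∈ B with x' ≾ x. -/
open MeasureTheory
open scoped ENNReal

/-!
Read along the `g`-orbit of `x`, the map `g̃` sends time `p` to `p + N (g^p x)`. Call `z ∈ B`
minimal if no earlier point of `B` on its `g`-orbit has a forward `g̃`-orbit meeting that of `z`.
Distinct minimal points have disjoint forward `g̃`-orbits, and the orbit started at time `i < M`
needs `g̃`-jumps of total length at least `M` to leave the window `[0, 2M)`. So `M` times the
number of minimal points among the first `M` times is at most the sum of `N` over the visits to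
`B` among the first `2M` times. Integrating against the invariant measure gives
`M² ν(minimal) ≤ 2M ∫_B N` for every `M`, so minimal points form a null set. Off the null set of
`g`-orbits through it, one steps back to earlier `≾`-predecessors forever, and aperiodicity
makes them distinct.
-/

open Finset

section Orbits
variable {α : Type*}

lemma simRel_trans {T : α → α} {a b c : α} (hab : simRel T a b) (hbc : simRel T b c) :
    simRel T a c := by
  obtain ⟨u, ⟨i, rfl⟩, j, hj⟩ := hab
  obtain ⟨v, ⟨i', rfl⟩, j', hj'⟩ := hbc
  refine ⟨T^[i' + i] a, ⟨_, rfl⟩, j + j', ?_⟩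
  calc T^[j + j'] c = T^[j] (T^[i'] b) := by rw [Function.iterate_add_apply, hj']
    _ = T^[i'] (T^[j] b) := (Function.Commute.iterate_iterate_self T i' j b).symm
    _ = T^[i' + i] a := by rw [hj, Function.iterate_add_apply]

lemma precRel_trans {g : α → α} {B : Set α} {a b c : α} (hab : precRel g B a b)
    (hbc : precRel g B b c) : precRel g B a c := by
  obtain ⟨m, rfl⟩ := hab
  obtain ⟨n, rfl⟩ := hbc
  exact ⟨n + m, Function.iterate_add_apply _ _ _ _⟩

lemma precRel_iterate {f : α → α} {B : Set α} {n : ℕ} {x : α} (hn : f^[n] x ∈ B) :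
    precRel f B x (f^[n] x) := by
  induction n using Nat.strong_induction_on generalizing x with
  | _ n ih =>
  rcases Nat.eq_zero_or_pos n with rfl | hn0
  · exact ⟨0, rfl⟩
  have hret : {t | 1 ≤ t ∧ f^[t] x ∈ B}.Nonempty := ⟨n, hn0, hn⟩
  obtain ⟨hr1, hrB⟩ : 1 ≤ firstRetTime f B x ∧ f^[firstRetTime f B x] x ∈ B := Nat.sInf_mem hret
  have hrn : firstRetTime f B x ≤ n := Nat.sInf_le ⟨hn0, hn⟩
  have hsplit : f^[n] x = f^[n - firstRetTime f B x] (firstRetMap f B x) := by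
    rw [firstRetMap, ← Function.iterate_add_apply, Nat.sub_add_cancel hrn]
  obtain ⟨m, hm⟩ := ih _ (by omega) (hsplit ▸ hn)
  exact ⟨m + 1, by rw [Function.iterate_succ_apply, hm, hsplit]⟩

end Orbits

section JumpCounting
variable {T : ℕ → ℕ} {P : Set ℕ}

lemma le_of_mem_fwdOrbit (hTP : Set.MapsTo T P P) (hlt : ∀ q ∈ P, q < T q) {p q : ℕ}
    (hp : p ∈ P) (hq : q ∈ fwdOrbit T p) : p ≤ q := by
  obtain ⟨k, rfl⟩ := hq
  induction k with
  | zero => rfl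
  | succ k ih =>
    rw [Function.iterate_succ_apply']
    exact ih.trans (hlt _ (hTP.iterate k hp)).le

open scoped Classical in
lemma sub_le_sum_fwdOrbit (hTP : Set.MapsTo T P P) (hlt : ∀ q ∈ P, q < T q) (L : ℕ) {i : ℕ}
    (hi : i ∈ P) : L - i ≤ ∑ q ∈ range L with q ∈ fwdOrbit T i, (T q - q) := by
  induction hd : L - i using Nat.strong_induction_on generalizing i with
  | _ d ih =>
  rcases le_or_gt L i with hLi | hiL
  · omega
  have hTi := hlt i hi
  have hsub : insert i {q ∈ range L | q ∈ fwdOrbit T (T i)} ⊆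
      {q ∈ range L | q ∈ fwdOrbit T i} := by
    refine Finset.insert_subset (by simpa using ⟨hiL, 0, rfl⟩) fun q hq => ?_
    obtain ⟨hqL, k, rfl⟩ := Finset.mem_filter.1 hq
    exact Finset.mem_filter.2 ⟨hqL, k + 1, Function.iterate_succ_apply _ _ _⟩
  have hi_notMem : i ∉ {q ∈ range L | q ∈ fwdOrbit T (T i)} := fun h =>
    (le_of_mem_fwdOrbit hTP hlt (hTP hi) (Finset.mem_filter.1 h).2).not_gt hTi
  have := ih (L - T i) (by omega) (hTP hi) rfl
  calc d ≤ (T i - i) + ∑ q ∈ range L with q ∈ fwdOrbit T (T i), (T q - q) := by omega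
    _ = ∑ q ∈ insert i {q ∈ range L | q ∈ fwdOrbit T (T i)}, (T q - q) := by
      rw [Finset.sum_insert hi_notMem]
    _ ≤ _ := Finset.sum_le_sum_of_subset hsub

open scoped Classical in
lemma card_mul_le_sum_of_pairwise_not_simRel (hTP : Set.MapsTo T P P) (hlt : ∀ q ∈ P, q < T q)
    {S : Finset ℕ} (hSP : ↑S ⊆ P) (hS : ∀ i ∈ S, ∀ j ∈ S, i < j → ¬ simRel T i j)
    {d L : ℕ} (hdL : ∀ i ∈ S, i + d ≤ L) :
    #S * d ≤ ∑ q ∈ range L with q ∈ P, (T q - q) := by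
  have hdisj : (S : Set ℕ).PairwiseDisjoint fun i => {q ∈ range L | q ∈ fwdOrbit T i} :=
    fun i hi j hj hij => Finset.disjoint_left.2 fun q hqi hqj => by
      have hqi := (Finset.mem_filter.1 hqi).2
      have hqj := (Finset.mem_filter.1 hqj).2
      rcases hij.lt_or_gt with h | h
      · exact hS i hi j hj h ⟨q, hqi, hqj⟩
      · exact hS j hj i hi h ⟨q, hqj, hqi⟩
  have hsub : S.biUnion (fun i => {q ∈ range L | q ∈ fwdOrbit T i}) ⊆
      {q ∈ range L | q ∈ P} := by
    intro q hq
    obtain ⟨i, hi, hq⟩ := Finset.mem_biUnion.1 hq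
    obtain ⟨hqL, k, rfl⟩ := Finset.mem_filter.1 hq
    exact Finset.mem_filter.2 ⟨hqL, hTP.iterate k (hSP hi)⟩
  calc #S * d = ∑ _i ∈ S, d := by rw [Finset.sum_const, smul_eq_mul]
    _ ≤ ∑ i ∈ S, ∑ q ∈ range L with q ∈ fwdOrbit T i, (T q - q) :=
      Finset.sum_le_sum fun i hi =>
        (Nat.le_sub_of_add_le' (hdL i hi)).trans (sub_le_sum_fwdOrbit hTP hlt L (hSP hi))
    _ = ∑ q ∈ S.biUnion fun i => {q ∈ range L | q ∈ fwdOrbit T i}, (T q - q) :=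
      (Finset.sum_biUnion hdisj).symm
    _ ≤ _ := Finset.sum_le_sum_of_subset hsub

end JumpCounting


section JumpTime
variable {X : Type*} (g : X → X) (N : X → ℕ)

/-- `g̃ = g^N` read on the times of the `g`-orbit of `x`. -/
def jumpTime (x : X) (p : ℕ) : ℕ := p + N (g^[p] x)

lemma iterate_iterate_jumpTime (x : X) (k p : ℕ) :
    g^[(jumpTime g N x)^[k] p] x = (fun y => g^[N y] y)^[k] (g^[p] x) := by
  induction k with
  | zero => rfl
  | succ k ih =>
    rw [Function.iterate_succ_apply', Function.iterate_succ_apply', ← ih, jumpTime, add_comm,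
      Function.iterate_add_apply]

lemma simRel_iterate_of_simRel_jumpTime {x : X} {a b : ℕ} (h : simRel (jumpTime g N x) a b) :
    simRel (fun y => g^[N y] y) (g^[a] x) (g^[b] x) := by
  obtain ⟨q, ⟨k, hk⟩, l, hl⟩ := h
  exact ⟨_, ⟨k, (iterate_iterate_jumpTime g N x k a).symm⟩, l,
    by rw [← iterate_iterate_jumpTime, hl, hk]⟩

lemma iterate_jumpTime_iterate_add (x : X) (i k p : ℕ) :
    (jumpTime g N (g^[i] x))^[k] p + i = (jumpTime g N x)^[k] (p + i) := by
  induction k with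
  | zero => rfl
  | succ k ih =>
    rw [Function.iterate_succ_apply', Function.iterate_succ_apply', ← ih, jumpTime, jumpTime,
      ← Function.iterate_add_apply]
    ring

lemma simRel_jumpTime_iterate {x : X} {a b i : ℕ}
    (h : simRel (jumpTime g N x) (a + i) (b + i)) : simRel (jumpTime g N (g^[i] x)) a b := by
  obtain ⟨q, ⟨k, hk⟩, l, hl⟩ := h
  refine ⟨_, ⟨k, rfl⟩, l, ?_⟩
  have := iterate_jumpTime_iterate_add g N x i k a
  have := iterate_jumpTime_iterate_add g N x i l b
  omega

variable [MeasurableSpace X] {g N}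

lemma measurable_iterate_jumpTime (hg : Measurable g) (hN : Measurable N) (k p : ℕ) :
    Measurable fun x => (jumpTime g N x)^[k] p := by
  have hN_iterate : Measurable fun z : X × ℕ => N (g^[z.2] z.1) :=
    measurable_from_prod_countable_left fun n => hN.comp (hg.iterate n)
  induction k with
  | zero => exact measurable_const
  | succ k ih =>
    simp only [Function.iterate_succ_apply', jumpTime]
    exact ih.add (hN_iterate.comp (measurable_id.prodMk ih))

lemma measurableSet_simRel_jumpTime (hg : Measurable g) (hN : Measurable N) (a b : ℕ) :
    MeasurableSet {x | simRel (jumpTime g N x) a b} := by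
  have : {x | simRel (jumpTime g N x) a b} =
      ⋃ k, ⋃ l, {x | (jumpTime g N x)^[k] a = (jumpTime g N x)^[l] b} := by
    ext x
    simp only [simRel, fwdOrbit, Set.Nonempty, Set.mem_inter_iff, Set.mem_ofPred_eq,
      Set.mem_iUnion]
    exact ⟨fun ⟨_, ⟨k, hk⟩, l, hl⟩ => ⟨k, l, hk.trans hl.symm⟩,
      fun ⟨k, l, h⟩ => ⟨_, ⟨k, rfl⟩, l, h.symm⟩⟩
  rw [this]
  exact .iUnion fun k => .iUnion fun l => measurableSet_eq_fun
    (measurable_iterate_jumpTime hg hN k a) (measurable_iterate_jumpTime hg hN l b)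

end JumpTime

section MinimalSet
variable {X : Type*} [MeasurableSpace X] {g : X ≃ᵐ X} {B : Set X} {N : X → ℕ}

lemma lintegral_birkhoffSum {ν : Measure X} {f : X → X} (hf : MeasurePreserving f ν ν)
    {φ : X → ℝ≥0∞} (hφ : Measurable φ) (n : ℕ) :
    ∫⁻ x, birkhoffSum f φ n x ∂ν = n * ∫⁻ x, φ x ∂ν := by
  simp only [birkhoffSum]
  rw [lintegral_finsetSum (f := fun k x => φ (f^[k] x)) _ fun k _ =>
    hφ.comp (hf.iterate k).measurable]
  simp [(hf.iterate _).lintegral_comp hφ]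

/-- The `≾`-minimal points of `B`. Merging of the `g̃`-orbits of `z` and `g^{-j} z` is tested on
their times along the `g`-orbit of `g^{-j} z`, which keeps the set measurable without any
assumption on the diagonal of `X`. -/
def minimalSet (g : X ≃ᵐ X) (B : Set X) (N : X → ℕ) : Set X :=
  {z | z ∈ B ∧ ∀ j, 1 ≤ j → g.symm^[j] z ∈ B → ¬ simRel (jumpTime g N (g.symm^[j] z)) 0 j}

lemma measurableSet_minimalSet (hB : MeasurableSet B) (hN : Measurable N) :
    MeasurableSet (minimalSet g B N) := by
  refine hB.inter (measurableSet_setOfPred.2 (Measurable.forall fun j =>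
    measurable_const.imp (Measurable.imp ?_ ?_)))
  · exact measurableSet_setOfPred.1 ((g.symm.measurable.iterate j) hB)
  · exact (measurableSet_setOfPred.1 ((measurableSet_simRel_jumpTime g.measurable hN 0 j).preimage
      (g.symm.measurable.iterate j))).not

lemma exists_precsim_of_notMem_minimalSet {z : X} (hz : z ∈ B) (hD : z ∉ minimalSet g B N) :
    ∃ j, 1 ≤ j ∧ g.symm^[j] z ∈ B ∧ precsim g B (fun y => g^[N y] y) (g.symm^[j] z) z := by
  obtain ⟨j, hj, hjB, hmerge⟩ : ∃ j, 1 ≤ j ∧ g.symm^[j] z ∈ B ∧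
      simRel (jumpTime g N (g.symm^[j] z)) 0 j := by
    simpa [minimalSet, hz] using hD
  have hback : g^[j] (g.symm^[j] z) = z := (Function.LeftInverse.iterate g.apply_symm_apply j) z
  refine ⟨j, hj, hjB, ?_, ?_⟩
  · have := precRel_iterate (f := g) (n := j) (x := g.symm^[j] z) (hback ▸ hz)
    rwa [hback] at this
  · simpa only [hback, Function.iterate_zero_apply] using
      simRel_iterate_of_simRel_jumpTime g N hmerge

lemma birkhoffSum_indicator_minimalSet_mul_le (hN1 : ∀ x ∈ B, 1 ≤ N x) {x : X}
    (hx : ∀ q, g^[q] x ∈ B → g^[N (g^[q] x)] (g^[q] x) ∈ B) (M : ℕ) :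
    birkhoffSum g ((minimalSet g B N).indicator 1) M x * M ≤
      birkhoffSum g (B.indicator N) (2 * M) x := by
  classical
  set T := jumpTime g N x
  set P : Set ℕ := {q | g^[q] x ∈ B}
  have hTP : Set.MapsTo T P P := fun q hq => by
    simpa only [T, P, jumpTime, Set.mem_ofPred_eq, add_comm q, Function.iterate_add_apply]
      using hx q hq
  have hlt : ∀ q ∈ P, q < T q := fun q hq => by simp only [T, jumpTime]; linarith [hN1 _ hq]
  set S := {i ∈ range M | g^[i] x ∈ minimalSet g B N}
  have hSP : ↑S ⊆ P := fun i hi => (Finset.mem_filter.1 hi).2.1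
  have hS : ∀ i ∈ S, ∀ j ∈ S, i < j → ¬ simRel T i j := by
    intro i hi j hj hij hmerge
    have hsymm : g.symm^[j - i] (g^[j] x) = g^[i] x := by
      obtain ⟨k, rfl⟩ := Nat.exists_eq_add_of_le hij.le
      rw [Nat.add_sub_cancel_left, add_comm, Function.iterate_add_apply,
        Function.LeftInverse.iterate g.symm_apply_apply]
    refine (Finset.mem_filter.1 hj).2.2 (j - i) (by omega) (hsymm ▸ hSP hi) ?_
    rw [hsymm]
    exact simRel_jumpTime_iterate g N (by rwa [zero_add, Nat.sub_add_cancel hij.le])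
  have key := card_mul_le_sum_of_pairwise_not_simRel hTP hlt hSP hS (d := M) (L := 2 * M)
    fun i hi => by have := Finset.mem_range.1 (Finset.mem_filter.1 hi).1; omega
  convert key using 2
  · simp [birkhoffSum, Set.indicator_apply, S]
  · simp [birkhoffSum, Set.indicator_apply, Finset.sum_filter, T, P, jumpTime]

lemma measure_minimalSet_eq_zero {ν : Measure X} (hg : MeasurePreserving g ν ν)
    (hB : MeasurableSet B) (hN : Measurable N) (hN1 : ∀ x ∈ B, 1 ≤ N x)
    (hret : ∀ᵐ x ∂ν, x ∈ B → g^[N x] x ∈ B) (hint : ∫⁻ x in B, (N x : ℝ≥0∞) ∂ν < ⊤) :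
    ν (minimalSet g B N) = 0 := by
  set D := minimalSet g B N
  set C := ∫⁻ x in B, (N x : ℝ≥0∞) ∂ν
  have hD := measurableSet_minimalSet (g := g) hB hN
  have hN' : Measurable fun x => (N x : ℝ≥0∞) := measurable_from_top.comp hN
  have hgood : ∀ᵐ x ∂ν, ∀ q, g^[q] x ∈ B → g^[N (g^[q] x)] (g^[q] x) ∈ B :=
    ae_all_iff.2 fun q => (hg.iterate q).quasiMeasurePreserving.ae hret
  have hbound : ∀ M : ℕ, (M : ℝ≥0∞) * (M * ν D) ≤ M * (2 * C) := fun M =>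
    calc (M : ℝ≥0∞) * (M * ν D)
        = ∫⁻ x, birkhoffSum g (D.indicator 1) M x * M ∂ν := by
          rw [lintegral_mul_const' _ _ (ENNReal.natCast_ne_top M),
            lintegral_birkhoffSum hg (measurable_one.indicator hD), lintegral_indicator_one hD]
          ring
      _ ≤ ∫⁻ x, birkhoffSum g (B.indicator fun y => (N y : ℝ≥0∞)) (2 * M) x ∂ν := by
          refine lintegral_mono_ae (hgood.mono fun x hx => ?_)
          classical
          have := Nat.cast_le (α := ℝ≥0∞) |>.2
            (birkhoffSum_indicator_minimalSet_mul_le hN1 hx M)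
          simpa [birkhoffSum, Set.indicator_apply, apply_ite] using this
      _ = M * (2 * C) := by
          rw [lintegral_birkhoffSum hg (hN'.indicator hB), lintegral_indicator hB]
          push_cast
          ring
  by_contra hD0
  have h2C : 2 * C ≠ ∞ := ENNReal.mul_ne_top (by norm_num) hint.ne
  obtain ⟨n, hn⟩ := ENNReal.exists_nat_mul_gt hD0 h2C
  have hn0 : (n : ℝ≥0∞) ≠ 0 := by rintro h; simp [h] at hn
  exact (ENNReal.mul_le_mul_iff_right hn0 (ENNReal.natCast_ne_top n) |>.1 (hbound n)).not_gt hn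

lemma exists_precsim_iterate_symm_ge {x : X} (hx : x ∈ B)
    (hD : ∀ c, g.symm^[c] x ∉ minimalSet g B N) (m : ℕ) :
    ∃ c, m ≤ c ∧ g.symm^[c] x ∈ B ∧ precsim g B (fun y => g^[N y] y) (g.symm^[c] x) x := by
  induction m with
  | zero => exact ⟨0, le_rfl, hx, ⟨0, rfl⟩, x, ⟨0, rfl⟩, 0, rfl⟩
  | succ m ih =>
    obtain ⟨c, hmc, hcB, hc⟩ := ih
    obtain ⟨j, hj, hjB, hjc⟩ := exists_precsim_of_notMem_minimalSet hcB (hD c)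
    rw [← Function.iterate_add_apply] at hjB hjc
    exact ⟨j + c, by omega, hjB, precRel_trans hjc.1 hc.1, simRel_trans hjc.2 hc.2⟩

lemma injective_iterate_symm_apply {x : X} (hx : ∀ n, 1 ≤ n → g^[n] x ≠ x) :
    Function.Injective fun c => g.symm^[c] x := by
  refine Function.Injective.of_lt_imp_ne fun a b hab heq => ?_
  obtain ⟨k, rfl⟩ := Nat.exists_eq_add_of_lt hab
  have hb : g^[a + k + 1] (g.symm^[a + k + 1] x) = x :=
    Function.LeftInverse.iterate g.apply_symm_apply _ x
  rw [← heq, show a + k + 1 = (k + 1) + a by omega, Function.iterate_add_apply,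
    Function.LeftInverse.iterate g.apply_symm_apply] at hb
  exact hx (k + 1) (by omega) hb

end MinimalSet

theorem stmt_5_general {X : Type*} [MeasurableSpace X]
    (ν : Measure X)
    (g : X ≃ᵐ X) (hg : MeasurePreserving g ν ν)
    (hper : ∀ᵐ x ∂ν, ∀ n : ℕ, 1 ≤ n → (⇑g)^[n] x ≠ x)
    (B : Set X) (hB : MeasurableSet B)
    (N : X → ℕ) (hNmeas : Measurable N) (hN1 : ∀ x ∈ B, 1 ≤ N x)
    (hret : ∀ᵐ x ∂ν, x ∈ B → (⇑g)^[N x] x ∈ B)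
    (hint : ∫⁻ x in B, (N x : ℝ≥0∞) ∂ν < ⊤)
    (gt : X → X) (hgt : ∀ x, gt x = (⇑g)^[N x] x) :
    ∀ᵐ x ∂ν, x ∈ B →
      (∃ x' ∈ B, precsim (⇑g) B gt x' x ∧ x' ≠ x) ∧
      {x' ∈ B | precsim (⇑g) B gt x' x}.Infinite := by
  obtain rfl : gt = fun x => g^[N x] x := funext hgt
  have hD := measure_minimalSet_eq_zero hg hB hNmeas hN1 hret hint
  have hbwd : ∀ᵐ x ∂ν, ∀ c, g.symm^[c] x ∉ minimalSet g B N :=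
    ae_all_iff.2 fun c => ((hg.symm g).iterate c).quasiMeasurePreserving.ae
      (measure_eq_zero_iff_ae_notMem.1 hD)
  filter_upwards [hper, hbwd] with x hxper hxD hx
  have hchain := exists_precsim_iterate_symm_ge hx hxD
  have hinj := injective_iterate_symm_apply hxper
  obtain ⟨c, hc, hcB, hcx⟩ := hchain 1
  refine ⟨⟨_, hcB, hcx, hinj.ne (by omega : c ≠ 0)⟩, ?_⟩
  have hinf : {c | g.symm^[c] x ∈ B ∧
      precsim g B (fun y => g^[N y] y) (g.symm^[c] x) x}.Infinite :=
    Set.infinite_of_forall_exists_gt fun m => by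
      obtain ⟨c, hc, hcx⟩ := hchain (m + 1)
      exact ⟨c, hcx, hc⟩
  exact (hinf.image hinj.injOn).mono (Set.image_subset_iff.2 fun c hc => hc)

/-- cf. [Sun], Proposition 4.2.  With `g` an invertible
bi-measurable measure-preserving transformation of the probability space
`(X, ν)`, a.e. point non-periodic, `B` of positive measure, `N ≥ 1` on `B`
measurable with `g̃ x = g^[N x] x ∈ B` for a.e. `x ∈ B` and `∫_B N dν < ∞`:
for ν-a.e. `x ∈ B` there is `x' ∈ B` with `x' ≾ x` and `x' ≠ x`; hence for
ν-a.e. `x ∈ B` there are infinitely many `x' ∈ B` with `x' ≾ x`. -/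
theorem stmt_5 {X : Type*} [MeasurableSpace X]
    (ν : Measure X) [IsProbabilityMeasure ν]
    (g : X ≃ᵐ X) (hg : MeasurePreserving g ν ν)
    (hper : ∀ᵐ x ∂ν, ∀ n : ℕ, 1 ≤ n → (⇑g)^[n] x ≠ x)
    (B : Set X) (hB : MeasurableSet B) (hBpos : 0 < ν B)
    (N : X → ℕ) (hNmeas : Measurable N) (hN1 : ∀ x ∈ B, 1 ≤ N x)
    (hret : ∀ᵐ x ∂ν, x ∈ B → (⇑g)^[N x] x ∈ B)
    (hint : ∫⁻ x in B, (N x : ℝ≥0∞) ∂ν < ⊤)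
    (gt : X → X) (hgt : ∀ x, gt x = (⇑g)^[N x] x) :
    ∀ᵐ x ∂ν, x ∈ B →
      (∃ x' ∈ B, precsim (⇑g) B gt x' x ∧ x' ≠ x) ∧
      {x' ∈ B | precsim (⇑g) B gt x' x}.Infinite :=
  stmt_5_general ν g hg hper B hB N hNmeas hN1 hret hint gt hgt
end

section
/- For ν-a.e. x ∈ B, the preimage set g̃^{-1}(x) = {x' ∈ B : g^{N(x')}(x') = x} is finite. -/
open MeasureTheory
open scoped ENNReal

/-- finiteness of the fibers of the return map `g̃`.
`g` is an invertible bi-measurable measure-preserving transformation of a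
probability space `(X, ν)` with ν-a.e. point non-periodic.  `B ⊆ X` is
measurable with `ν(B) > 0`, and `N` is a measurable function with
`N(x) ≥ 1` on `B`, `g̃(x) := g^[N x] x ∈ B` for ν-a.e. `x ∈ B`, and
`∫_B N dν < ∞`.  Then for ν-a.e. `x ∈ B`, the preimage set
`g̃⁻¹(x) = {x' ∈ B : g^[N x'] x' = x}` is finite. -/
theorem stmt_7 {X : Type*} [MeasurableSpace X]
    (ν : Measure X) [IsProbabilityMeasure ν]
    (g : X ≃ᵐ X) (hg : MeasurePreserving g ν ν)
    (hper : ∀ᵐ x ∂ν, ∀ n : ℕ, 1 ≤ n → (⇑g)^[n] x ≠ x)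
    (B : Set X) (hB : MeasurableSet B) (hBpos : 0 < ν B)
    (N : X → ℕ) (hNmeas : Measurable N) (hN1 : ∀ x ∈ B, 1 ≤ N x)
    (hret : ∀ᵐ x ∂ν, x ∈ B → (⇑g)^[N x] x ∈ B)
    (hint : ∫⁻ x in B, (N x : ℝ≥0∞) ∂ν < ⊤) :
    ∀ᵐ x ∂ν, x ∈ B → {x' ∈ B | (⇑g)^[N x'] x' = x}.Finite := by
  -- The candidate preimages of `x` are the points `g⁻ⁿ x`; define
  -- `A n := {x | g⁻ⁿ x ∈ B ∧ N (g⁻ⁿ x) = n}`.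
  set A : ℕ → Set X := fun n => (⇑g.symm)^[n] ⁻¹' (B ∩ N ⁻¹' {n}) with hA
  have hmpn : ∀ n : ℕ, MeasurePreserving ((⇑g.symm)^[n]) ν ν :=
    fun n => (hg.symm g).iterate n
  have hmeasBn : ∀ n : ℕ, MeasurableSet (B ∩ N ⁻¹' {n}) :=
    fun n => hB.inter (hNmeas (measurableSet_singleton n))
  have hνA : ∀ n : ℕ, ν (A n) = ν (B ∩ N ⁻¹' {n}) := fun n =>
    (hmpn n).measure_preimage (hmeasBn n).nullMeasurableSet
  have hdisj : Pairwise (Function.onFun Disjoint fun n => B ∩ N ⁻¹' {n}) := by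
    intro m n hmn
    refine Set.disjoint_left.2 fun y hy hy' => hmn ?_
    have h1 : N y = m := hy.2
    have h2 : N y = n := hy'.2
    rw [← h1, h2]
  have hsum : (∑' n, ν (A n)) ≠ ∞ := by
    have : (∑' n, ν (A n)) = ν (⋃ n, B ∩ N ⁻¹' {n}) := by
      simp_rw [hνA]
      exact (measure_iUnion hdisj hmeasBn).symm
    rw [this]
    exact (measure_lt_top ν _).ne
  -- Borel–Cantelli: a.e. `x` belongs to only finitely many `A n`.
  filter_upwards [MeasureTheory.ae_eventually_notMem hsum] with x hx _hxB
  obtain ⟨m, hm⟩ := Filter.eventually_atTop.1 hx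
  -- The fiber is contained in the image of a finite set of indices.
  have hsub : {x' ∈ B | (⇑g)^[N x'] x' = x} ⊆
      (fun n => (⇑g.symm)^[n] x) '' (Set.Iio m) := by
    rintro x' ⟨hx'B, hx'⟩
    refine ⟨N x', ?_, ?_⟩
    · by_contra hlt
      apply hm (N x') (Set.notMem_Iio.1 hlt)
      show (⇑g.symm)^[N x'] x ∈ B ∩ N ⁻¹' {N x'}
      have : (⇑g.symm)^[N x'] x = x' := by
        rw [← hx']
        exact (Function.LeftInverse.iterate g.symm_apply_apply (N x')) x'
      rw [this]
      exact ⟨hx'B, rfl⟩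
    · rw [← hx']
      exact (Function.LeftInverse.iterate g.symm_apply_apply (N x')) x'
  exact ((Set.finite_Iio m).image _).subset hsub
end

section
/- Let T : B → B be a map with finite fibers (every point has only finitely many T-preimages in B), and let B̃ = ⋂_{j=1}^∞ T^j(B). Then for every x ∈ B̃, the set T^{-1}(x) ∩ B̃ is nonempty; that is, every point lying in the forward T-image of B of all orders has a T-preimage with the same property. -/
/-- points in all forward images have preimages in all
forward images.  `T : B → B` is a map of the set `B` into itself with
finite fibers, and `B̃ = ⋂_{j ≥ 1} T^j(B)`.  Then every `x ∈ B̃` has a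
`T`-preimage lying in `B̃`, i.e. `T⁻¹(x) ∩ B̃ ≠ ∅`. -/
theorem stmt_8 {α : Type*} (B : Set α) (T : α → α)
    (hT : Set.MapsTo T B B)
    (hfin : ∀ x ∈ B, {y ∈ B | T y = x}.Finite)
    (Bt : Set α) (hBt : Bt = ⋂ j : ℕ, T^[j + 1] '' B) :
    ∀ x ∈ Bt, ∃ y ∈ Bt, T y = x := by
  intro x hx
  subst hBt
  simp only [Set.mem_iInter] at hx
  -- the decreasing images
  have hmono : ∀ j : ℕ, T^[j + 1] '' B ⊆ T^[j] '' B := by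
    intro j
    rintro _ ⟨b, hb, rfl⟩
    exact ⟨T b, hT hb, by rw [← Function.iterate_succ_apply, Function.iterate_succ_apply']⟩
  have hanti : Antitone fun j : ℕ => T^[j + 1] '' B :=
    antitone_nat_of_succ_le fun j => hmono (j + 1)
  have hxB : x ∈ B := by
    obtain ⟨b, hb, rfl⟩ := hx 0
    exact hT hb
  set F := {y ∈ B | T y = x} with hF
  have hFfin : F.Finite := hfin x hxB
  -- for each j, pick a preimage of x in T^[j+1] '' B
  have key : ∀ j : ℕ, ∃ y : F, (y : α) ∈ T^[j + 1] '' B := by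
    intro j
    obtain ⟨b, hb, hbx⟩ := hx (j + 1)
    refine ⟨⟨T^[j + 1] b, ⟨?_, ?_⟩⟩, ⟨b, hb, rfl⟩⟩
    · rw [Function.iterate_succ_apply']
      exact hT (hT.iterate j hb)
    · rw [← Function.iterate_succ_apply' T (j + 1) b]; exact hbx
  choose f hf using key
  have : F.Nonempty := ⟨(f 0 : α), (f 0).2⟩
  haveI : Finite F := hFfin.to_subtype
  obtain ⟨y, hy⟩ := Finite.exists_infinite_fiber f
  rw [Set.infinite_coe_iff] at hy
  refine ⟨(y : α), ?_, y.2.2⟩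
  simp only [Set.mem_iInter]
  intro j
  obtain ⟨n, hn, hnj⟩ := hy.exists_gt j
  have : (f n : α) = y := congrArg Subtype.val (by simpa using hn)
  exact hanti hnj.le (this ▸ hf n)
end

section
/- Suppose in addition that g is ergodic and that C ⊂ B' is a measurable set with ν(C) > 0 and T(C) = C (with T restricted to C a bijection of C). Then ∫_C N dν ≥ 1. -/
open MeasureTheory
open scoped ENNReal

/-!
Over each point `x` of `C` stack the orbit segment `x, g x, …, g^(N x - 1) x`. Since
`g^(N x) x = T x` lands back in `C`, the union of these segments is a `g`-invariant set
containing `C`, so by ergodicity it has full measure. As `g` preserves `ν`, the measure of the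
union is at most `∑ᵢ ν {x ∈ C | i < N x} = ∫_C N dν`.
-/

namespace MeasurableEquiv

variable {X : Type*} [MeasurableSpace X] (g : X ≃ᵐ X)

theorem measurableSet_image_iterate {s : Set X} (hs : MeasurableSet s) (n : ℕ) :
    MeasurableSet (g^[n] '' s) := by
  induction n with
  | zero => simpa using hs
  | succ n ih =>
    rw [Function.iterate_succ', Set.image_comp]
    exact g.measurableSet_image.2 ih

theorem measure_image_iterate {μ : Measure X} (hg : MeasurePreserving g μ μ) (s : Set X)
    (n : ℕ) : μ (g^[n] '' s) = μ s := by
  induction n with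
  | zero => simp
  | succ n ih =>
    rw [Function.iterate_succ', Set.image_comp, ← ih, ← hg.measure_preimage_equiv,
      g.injective.preimage_image]

end MeasurableEquiv

theorem MeasureTheory.lintegral_natCast_eq_tsum_measure_lt {X : Type*} [MeasurableSpace X]
    (μ : Measure X) {N : X → ℕ} (hN : Measurable N) :
    ∫⁻ x, (N x : ℝ≥0∞) ∂μ = ∑' i : ℕ, μ {x | i < N x} := by
  have hlevel : ∀ i : ℕ, MeasurableSet {x | i < N x} := fun _ =>
    measurableSet_lt measurable_const hN
  have hcount : ∀ x, (N x : ℝ≥0∞) = ∑' i : ℕ, {x | i < N x}.indicator 1 x := by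
    intro x
    rw [tsum_eq_sum (s := Finset.range (N x)) fun i hi => by
      simpa [Set.indicator_apply] using hi]
    simp [Set.indicator_apply, Finset.filter_true_of_mem fun i hi => Finset.mem_range.1 hi]
  simp_rw [hcount]
  rw [lintegral_tsum fun i => (measurable_one.indicator (hlevel i)).aemeasurable]
  simp_rw [lintegral_indicator_one (hlevel _)]

theorem Ergodic.measure_eq_one_of_subset_preimage {X : Type*} [MeasurableSpace X]
    {μ : Measure X} [IsProbabilityMeasure μ] {f : X → X} (hf : Ergodic f μ) {s : Set X}
    (hs : NullMeasurableSet s μ) (hfs : s ⊆ f ⁻¹' s) (hs0 : μ s ≠ 0) : μ s = 1 := by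
  rcases hf.ae_empty_or_univ_of_ae_le_preimage' hs hfs.eventuallyLE
      (measure_ne_top μ s) with h | h
  · exact absurd (by simpa using measure_congr h) hs0
  · simpa using measure_congr h

section ReturnTower

variable {X : Type*}

/-- The Kakutani tower of height `N` over the base `C`. -/
def returnTower (f : X → X) (C : Set X) (N : X → ℕ) : Set X :=
  ⋃ i : ℕ, f^[i] '' {x ∈ C | i < N x}

variable {f : X → X} {C : Set X} {N : X → ℕ}

theorem mem_returnTower_of_mem (hN : ∀ x ∈ C, 1 ≤ N x) {x : X} (hx : x ∈ C) :
    x ∈ returnTower f C N :=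
  Set.mem_iUnion.2 ⟨0, x, ⟨hx, hN x hx⟩, rfl⟩

theorem returnTower_subset_preimage (hN : ∀ x ∈ C, 1 ≤ N x)
    (hret : ∀ x ∈ C, f^[N x] x ∈ C) : returnTower f C N ⊆ f ⁻¹' returnTower f C N := by
  rintro _ hy
  obtain ⟨i, x, ⟨hxC, hi⟩, rfl⟩ := Set.mem_iUnion.1 hy
  rw [Set.mem_preimage, ← Function.iterate_succ_apply' f i x]
  rcases (Nat.succ_le_of_lt hi).lt_or_eq with hlt | heq
  · exact Set.mem_iUnion.2 ⟨i + 1, x, ⟨hxC, hlt⟩, rfl⟩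
  · exact heq ▸ mem_returnTower_of_mem hN (hret x hxC)

variable [MeasurableSpace X]

theorem measurableSet_returnTower (g : X ≃ᵐ X) (hC : MeasurableSet C) (hN : Measurable N) :
    MeasurableSet (returnTower g C N) :=
  MeasurableSet.iUnion fun i =>
    g.measurableSet_image_iterate (hC.inter (measurableSet_lt measurable_const hN)) i

theorem measure_returnTower_le {μ : Measure X} {g : X ≃ᵐ X} (hg : MeasurePreserving g μ μ)
    (hN : Measurable N) : μ (returnTower g C N) ≤ ∫⁻ x in C, (N x : ℝ≥0∞) ∂μ := by
  rw [lintegral_natCast_eq_tsum_measure_lt _ hN]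
  refine (measure_iUnion_le _).trans (ENNReal.tsum_le_tsum fun i => ?_)
  rw [g.measure_image_iterate hg, Measure.restrict_apply (measurableSet_lt measurable_const hN),
    Set.inter_comm]
  rfl

end ReturnTower

theorem stmt_11_general {X : Type*} [MeasurableSpace X]
    (ν : Measure X) [IsProbabilityMeasure ν]
    (g : X ≃ᵐ X)
    (herg : Ergodic (⇑g) ν)
    (B' : Set X)
    (N : X → ℕ) (hNmeas : Measurable N) (hN1 : ∀ x ∈ B', 1 ≤ N x)
    (T : X → X) (hT : ∀ x, T x = (⇑g)^[N x] x)
    (C : Set X) (hC : MeasurableSet C) (hCB : C ⊆ B') (hCpos : 0 < ν C)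
    (hTC : Set.BijOn T C C) :
    1 ≤ ∫⁻ x in C, (N x : ℝ≥0∞) ∂ν := by
  have hN : ∀ x ∈ C, 1 ≤ N x := fun x hx => hN1 x (hCB hx)
  have hret : ∀ x ∈ C, (⇑g)^[N x] x ∈ C := fun x hx => hT x ▸ hTC.mapsTo hx
  have htower : ν (returnTower g C N) = 1 :=
    herg.measure_eq_one_of_subset_preimage
      (measurableSet_returnTower g hC hNmeas).nullMeasurableSet
      (returnTower_subset_preimage hN hret)
      (hCpos.trans_le (measure_mono fun _ => mem_returnTower_of_mem hN)).ne'
  exact htower ▸ measure_returnTower_le herg.toMeasurePreserving hNmeas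

/-- lower bound on the integral of the return time over
an invariant subset of the kernel.  `g` is an invertible bi-measurable
measure-preserving transformation of the probability space `(X, ν)` which
is ergodic, `B'` is measurable, `N` is measurable with `N(x) ≥ 1` on `B'`,
and `T x = g^[N x] x` maps `B'` bijectively onto itself.  If `C ⊆ B'` is
measurable with `ν(C) > 0` and `T` restricted to `C` is a bijection of `C`
(in particular `T(C) = C`), then `∫_C N dν ≥ 1`. -/
theorem stmt_11 {X : Type*} [MeasurableSpace X]
    (ν : Measure X) [IsProbabilityMeasure ν]
    (g : X ≃ᵐ X) (hg : MeasurePreserving g ν ν)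
    (herg : Ergodic (⇑g) ν)
    (B' : Set X) (hB' : MeasurableSet B')
    (N : X → ℕ) (hNmeas : Measurable N) (hN1 : ∀ x ∈ B', 1 ≤ N x)
    (T : X → X) (hT : ∀ x, T x = (⇑g)^[N x] x)
    (hbij : Set.BijOn T B' B')
    (C : Set X) (hC : MeasurableSet C) (hCB : C ⊆ B') (hCpos : 0 < ν C)
    (hTC : Set.BijOn T C C) :
    1 ≤ ∫⁻ x in C, (N x : ℝ≥0∞) ∂ν :=
  stmt_11_general ν g herg B' N hNmeas hN1 T hT C hC hCB hCpos hTC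
end
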